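/- arXiv:2507.19274 — 3 statements merged into one kernel-verified Lean document; each statement's English description precedes it below -/
import Mathlib

section
/- Let s, n ≥ 2 with s | n, let G = ℤ/nℤ, and let ρ(k) be the diagonal unitary representation with ρ(k)x = (x_l e^{2πilk/n})_l. Set Ω = {k ∈ {1,…,n} : k ≢ 0 mod s}. Then for every vector ξ ∈ ℂⁿ there exists a nonzero s-sparse vector x ∈ ℂⁿ with ⟨x, ρ(k)ξ⟩ = 0 for all k ∈ Ω. Consequently the measurement map x ↦ (⟨x, ρ(k)ξ⟩)_{k∈Ω} fails to be injective on s-sparse vectors, even though |Ω| = n − n/s. -/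
/-!
If some `ξ j` vanishes, the basis vector `e j` works. Otherwise write `n = s * m` and put
`x l = (conj (ξ l))⁻¹` on the `s` indices with `m ∣ l + 1`, and `0` elsewhere. Each surviving
term of `⟨x, ρ(k) ξ⟩` is then the conjugate of `ζ ^ ((t + 1) * (k + 1))` for the primitive
`s`-th root of unity `ζ = exp (2πi / s)`, so the inner product is the conjugate of a full
geometric sum of `ζ ^ (k + 1)`, which vanishes because `ζ ^ (k + 1) ≠ 1` when `s ∤ k + 1`.
-/

open Finset Complex Function Real

theorem IsPrimitiveRoot.geom_sum_pow_eq_zero {R : Type*} [CommRing R] [IsDomain R] {ζ : R}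
    {s a : ℕ} (hζ : IsPrimitiveRoot ζ s) (ha : ¬ s ∣ a) : ∑ t ∈ range s, (ζ ^ a) ^ t = 0 := by
  have hne : ζ ^ a ≠ 1 := by rwa [Ne, hζ.pow_eq_one_iff_dvd]
  refine eq_zero_of_ne_zero_of_mul_left_eq_zero (sub_ne_zero_of_ne hne.symm) ?_
  rw [mul_neg_geom_sum, ← pow_mul, mul_comm, pow_mul, hζ.pow_eq_one, one_pow, sub_self]

theorem IsPrimitiveRoot.sum_fin_pow_succ_mul_eq_zero {R : Type*} [CommRing R] [IsDomain R]
    {ζ : R} {s a : ℕ} (hζ : IsPrimitiveRoot ζ s) (ha : ¬ s ∣ a) :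
    ∑ t : Fin s, ζ ^ ((t + 1) * a) = 0 := by
  simp_rw [mul_comm _ a, pow_mul, pow_succ']
  rw [← mul_sum, Fin.sum_univ_eq_sum_range (fun t => (ζ ^ a) ^ t), hζ.geom_sum_pow_eq_zero ha,
    mul_zero]

theorem Complex.exp_two_pi_I_mul_mul_div_mul {a b s m : ℕ} (hm : m ≠ 0) :
    exp (2 * π * I * (a * m) * b / (s * m)) = exp (2 * π * I / s) ^ (a * b) := by
  rcases eq_or_ne s 0 with rfl | hs
  · simp
  rw [← exp_nat_mul]
  congr 1
  push_cast
  field_simp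

theorem exists_ne_zero_card_support_le_of_injective {ι κ R : Type*} [Fintype ι] [Fintype κ]
    [Semiring R] [DecidableEq R] {g : ι → κ} (hg : Injective g) {y : ι → R} (hy : y ≠ 0) :
    ∃ x : κ → R, x ≠ 0 ∧ (univ.filter fun j => x j ≠ 0).card ≤ Fintype.card ι ∧
      ∀ c : κ → R, ∑ l, x l * c l = ∑ t, y t * c (g t) := by
  classical
  refine ⟨extend g y 0, ?_, ?_, fun c => ?_⟩
  · obtain ⟨t, ht⟩ := Function.ne_iff.mp hy
    exact Function.ne_iff.mpr ⟨g t, by rwa [hg.extend_apply]⟩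
  · calc (univ.filter fun j => extend g y 0 j ≠ 0).card ≤ (univ.image g).card := by
          refine card_le_card fun l hl => ?_
          by_contra hl'
          exact (mem_filter.mp hl).2 (extend_apply' _ _ _ (by simpa using hl'))
      _ ≤ Fintype.card ι := card_image_le
  · refine (Fintype.sum_of_injective g hg _ _ (fun l hl => ?_) (fun t => ?_)).symm
    · rw [extend_apply' _ _ _ hl, Pi.zero_apply, zero_mul]
    · rw [hg.extend_apply]

def Fin.lastInBlock {s m : ℕ} [NeZero m] (t : Fin s) : Fin (s * m) :=
  ⟨((t : ℕ) + 1) * m - 1, by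
    have : m ≤ ((t : ℕ) + 1) * m := Nat.le_mul_of_pos_left m (Nat.succ_pos _)
    have : ((t : ℕ) + 1) * m ≤ s * m := Nat.mul_le_mul_right m t.isLt
    have := NeZero.pos m
    omega⟩

theorem Fin.lastInBlock_val_add_one {s m : ℕ} [NeZero m] (t : Fin s) :
    (t.lastInBlock (m := m) : ℕ) + 1 = ((t : ℕ) + 1) * m := by
  have := NeZero.pos m
  have : m ≤ ((t : ℕ) + 1) * m := Nat.le_mul_of_pos_left m (Nat.succ_pos _)
  simp only [Fin.lastInBlock]
  omega

theorem Fin.lastInBlock_injective {s m : ℕ} [NeZero m] :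
    Injective (Fin.lastInBlock : Fin s → Fin (s * m)) := fun a b hab => by
  have := congrArg (fun l : Fin (s * m) => (l : ℕ) + 1) hab
  simp only [Fin.lastInBlock_val_add_one] at this
  exact Fin.ext (by simpa using Nat.eq_of_mul_eq_mul_right (NeZero.pos m) this)

/-- Let `s, n ≥ 2` with `s ∣ n`, `G = ℤ/nℤ`, and let `ρ(k)` act diagonally by
`(ρ(k)x)_l = x_l e^{2πilk/n}`.  With `Ω = {k : k ≢ 0 mod s}` (indices `1,…,n` realized as
`k.1 + 1`), for every `ξ ∈ ℂⁿ` there is a nonzero `s`-sparse `x` with `⟨x, ρ(k)ξ⟩ = 0` for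
all `k ∈ Ω`; in particular the measurement map fails to be injective on `s`-sparse vectors. -/
theorem stmt_6 {s n : ℕ} (hs : 2 ≤ s) (hn : 2 ≤ n) (hdvd : s ∣ n) (ξ : Fin n → ℂ) :
    ∃ x : Fin n → ℂ, x ≠ 0 ∧
      (Finset.univ.filter (fun j => x j ≠ 0)).card ≤ s ∧
      ∀ k : Fin n, (k.1 + 1) % s ≠ 0 →
        ∑ l, x l * (starRingEnd ℂ)
            (ξ l * Complex.exp (2 * Real.pi * Complex.I * (l.1 + 1) * (k.1 + 1) / n)) = 0 := by
  by_cases hξ : ∃ j, ξ j = 0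
  · obtain ⟨j, hj⟩ := hξ
    obtain ⟨x, hx0, hxs, hx⟩ := exists_ne_zero_card_support_le_of_injective
      (injective_of_subsingleton fun _ : Unit => j) (y := 1) one_ne_zero (R := ℂ)
    exact ⟨x, hx0, hxs.trans (by rw [Fintype.card_unit]; omega), fun k _ => by simp [hx, hj]⟩
  push Not at hξ
  obtain ⟨m, rfl⟩ := hdvd
  have : NeZero m := ⟨by rintro rfl; simp at hn⟩
  obtain ⟨x, hx0, hxs, hx⟩ := exists_ne_zero_card_support_le_of_injective
    (Fin.lastInBlock_injective (s := s) (m := m))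
    (y := fun t : Fin s => (starRingEnd ℂ (ξ t.lastInBlock))⁻¹)
    (Function.ne_iff.mpr ⟨⟨0, by omega⟩, by simpa using hξ _⟩)
  refine ⟨x, hx0, by rwa [Fintype.card_fin] at hxs, fun k hk => ?_⟩
  have hcast (t : Fin s) :
      ((t.lastInBlock (m := m) : ℕ) + 1 : ℂ) = (((t : ℕ) + 1 : ℕ) : ℂ) * m := by
    exact_mod_cast t.lastInBlock_val_add_one
  calc _ = ∑ t : Fin s,
        starRingEnd ℂ (exp (2 * π * I / s) ^ (((t : ℕ) + 1) * ((k : ℕ) + 1))) := by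
        rw [hx]
        refine sum_congr rfl fun t _ => ?_
        rw [map_mul, ← mul_assoc, inv_mul_cancel₀ (by simpa using hξ _), one_mul, hcast,
          show ((k : ℂ) + 1) = ((k + 1 : ℕ) : ℂ) by push_cast; ring, Nat.cast_mul,
          exp_two_pi_I_mul_mul_div_mul (NeZero.ne m)]
    _ = 0 := by
      rw [← map_sum, (isPrimitiveRoot_exp s (by omega)).sum_fin_pow_succ_mul_eq_zero
        (by rwa [Nat.dvd_iff_mod_eq_zero]), map_zero]
end

section
/- Let G be a finite group, H a normal subgroup, and σ : H → U(k) a unitary representation. Let π_σ be the induced representation Ind_H^G σ realized on ℂ^{k·|H\G|} via a cross-section γ : H\G → G, acting by (π_σ(g)f)(υ) = σ(γ(υ)g·γ(υg)⁻¹) f(υg) for f : H\G → ℂ^k. Let Ω ⊆ G be a set whose elements lie in pairwise distinct right cosets of H. Then for every y and every standard basis vector e_j, Σ_{g∈Ω} |⟨e_j, π_σ(g)y⟩|² ≤ ‖y‖₂². -/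
/-!
The `g`-term is one coordinate of the unitary image of `y` at the coset `υ₀g`, so it is at most
the squared norm of that block of `y`. Normality of `H` makes `g ↦ υ₀g` injective on `Ω`, so
these blocks are distinct and their total is at most `‖y‖²`.
-/

open Matrix

theorem Matrix.sum_norm_sq_unitary_mulVec {n 𝕜 : Type*} [Fintype n] [DecidableEq n] [RCLike 𝕜]
    (U : unitaryGroup n 𝕜) (v : n → 𝕜) :
    ∑ j, ‖((U : Matrix n n 𝕜) *ᵥ v) j‖ ^ 2 = ∑ i, ‖v i‖ ^ 2 := by
  have hU : toEuclideanCLM (n := n) (𝕜 := 𝕜) U ∈ unitary _ := Unitary.map_mem _ U.2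
  have := congrArg (· ^ 2) ((toEuclideanCLM (n := n) (𝕜 := 𝕜) U).norm_map_of_mem_unitary hU
    (WithLp.toLp 2 v))
  simpa only [EuclideanSpace.norm_sq_eq, toEuclideanCLM_toLp] using this

theorem Matrix.norm_sq_unitary_mulVec_apply_le {n 𝕜 : Type*} [Fintype n] [DecidableEq n]
    [RCLike 𝕜] (U : unitaryGroup n 𝕜) (v : n → 𝕜) (j : n) :
    ‖((U : Matrix n n 𝕜) *ᵥ v) j‖ ^ 2 ≤ ∑ i, ‖v i‖ ^ 2 :=
  sum_norm_sq_unitary_mulVec U v ▸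
    Finset.single_le_sum (f := fun j => ‖((U : Matrix n n 𝕜) *ᵥ v) j‖ ^ 2)
      (fun _ _ => by positivity) (Finset.mem_univ j)

theorem QuotientGroup.rightRel_mul_left_iff {G : Type*} [Group G] {H : Subgroup G}
    (hH : H.Normal) (x a b : G) : rightRel H (x * a) (x * b) ↔ rightRel H a b := by
  rw [rightRel_apply, rightRel_apply, hH.mem_comm_iff, _root_.mul_inv_rev, mul_assoc,
    inv_mul_cancel_left, hH.mem_comm_iff]

theorem Finset.sum_comp_le_univ_sum_of_injOn {ι κ M : Type*} [Fintype κ] [AddCommMonoid M]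
    [PartialOrder M] [IsOrderedAddMonoid M] {s : Finset ι} {c : ι → κ} (hc : Set.InjOn c s)
    {f : κ → M} (hf : ∀ b, 0 ≤ f b) : ∑ i ∈ s, f (c i) ≤ ∑ b, f b := by
  classical
  rw [← Finset.sum_image hc]
  exact Finset.sum_le_univ_sum_of_nonneg hf

theorem stmt_12_general {G : Type*} [Group G] (H : Subgroup G) (hH : H.Normal)
    [Fintype (Quotient (QuotientGroup.rightRel H))]
    {k : ℕ} (σ : H →* Matrix.unitaryGroup (Fin k) ℂ)
    (γ : Quotient (QuotientGroup.rightRel H) → G)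
    (hmem : ∀ (υ : Quotient (QuotientGroup.rightRel H)) (g : G),
      γ υ * g * (γ (Quotient.mk (QuotientGroup.rightRel H) (γ υ * g)))⁻¹ ∈ H)
    (Ω : Finset G) (hΩ : ∀ a ∈ Ω, ∀ b ∈ Ω, a ≠ b → a * b⁻¹ ∉ H)
    (y : Quotient (QuotientGroup.rightRel H) → Fin k → ℂ)
    (υ₀ : Quotient (QuotientGroup.rightRel H)) (j₀ : Fin k) :
    ∑ g ∈ Ω, ‖
        ((σ ⟨γ υ₀ * g * (γ (Quotient.mk (QuotientGroup.rightRel H) (γ υ₀ * g)))⁻¹,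
              hmem υ₀ g⟩ : Matrix (Fin k) (Fin k) ℂ).mulVec
            (y (Quotient.mk (QuotientGroup.rightRel H) (γ υ₀ * g)))) j₀‖ ^ 2
      ≤ ∑ υ, ∑ i, ‖y υ i‖ ^ 2 := by
  have hinj : Set.InjOn (fun g => Quotient.mk (QuotientGroup.rightRel H) (γ υ₀ * g)) Ω := by
    intro a ha b hb hab
    by_contra hne
    refine hΩ b hb a ha (Ne.symm hne) ?_
    exact QuotientGroup.rightRel_apply.mp
      ((QuotientGroup.rightRel_mul_left_iff hH _ _ _).mp (Quotient.exact hab))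
  calc _ ≤ ∑ g ∈ Ω, ∑ i, ‖y (Quotient.mk (QuotientGroup.rightRel H) (γ υ₀ * g)) i‖ ^ 2 :=
        Finset.sum_le_sum fun g _ => norm_sq_unitary_mulVec_apply_le _ _ _
    _ ≤ ∑ υ, ∑ i, ‖y υ i‖ ^ 2 :=
        Finset.sum_comp_le_univ_sum_of_injOn (f := fun υ => ∑ i, ‖y υ i‖ ^ 2) hinj
          fun _ => by positivity

/-- Let `H` be a normal subgroup of a finite group `G` and
`σ : H → U(k)` a unitary representation.  Realize the induced representation `π_σ` on
functions `H\G → ℂ^k` via a cross-section `γ`, acting by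
`(π_σ(g)f)(υ) = σ(γ(υ)g·γ(υg)⁻¹) f(υg)`.  If the elements of `Ω ⊆ G` lie in pairwise
distinct right cosets of `H`, then for every `y` and every standard basis vector
(indexed by `(υ₀, j₀)`): `∑_{g∈Ω} |⟨e_{(υ₀,j₀)}, π_σ(g) y⟩|² ≤ ‖y‖₂²`. -/
theorem stmt_12 {G : Type*} [Group G] [Fintype G] (H : Subgroup G) (hH : H.Normal)
    [Fintype (Quotient (QuotientGroup.rightRel H))]
    {k : ℕ} (σ : H →* Matrix.unitaryGroup (Fin k) ℂ)
    (γ : Quotient (QuotientGroup.rightRel H) → G)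
    (hγ : ∀ υ, Quotient.mk (QuotientGroup.rightRel H) (γ υ) = υ)
    (hmem : ∀ (υ : Quotient (QuotientGroup.rightRel H)) (g : G),
      γ υ * g * (γ (Quotient.mk (QuotientGroup.rightRel H) (γ υ * g)))⁻¹ ∈ H)
    (Ω : Finset G) (hΩ : ∀ a ∈ Ω, ∀ b ∈ Ω, a ≠ b → a * b⁻¹ ∉ H)
    (y : Quotient (QuotientGroup.rightRel H) → Fin k → ℂ)
    (υ₀ : Quotient (QuotientGroup.rightRel H)) (j₀ : Fin k) :
    ∑ g ∈ Ω, ‖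
        ((σ ⟨γ υ₀ * g * (γ (Quotient.mk (QuotientGroup.rightRel H) (γ υ₀ * g)))⁻¹,
              hmem υ₀ g⟩ : Matrix (Fin k) (Fin k) ℂ).mulVec
            (y (Quotient.mk (QuotientGroup.rightRel H) (γ υ₀ * g)))) j₀‖ ^ 2
      ≤ ∑ υ, ∑ i, ‖y υ i‖ ^ 2 :=
  stmt_12_general H hH σ γ hmem Ω hΩ y υ₀ j₀
end

section
/- Let π : G → U(n) be a unitary subrepresentation of the left regular representation of a finite group G, given in block-diagonal form with irreducible blocks π_τ of dimensions d_{π_τ} and multiplicities m_π(π_τ). Let ξ ∈ ℂⁿ be the vector built blockwise from complex units ε_{τ,ι} ∈ 𝕋: for κ < m_π(π_τ), ξ^{τ,κ} = √(d_{π_τ})·ε_{τ,κ}·e_κ, and for κ = m_π(π_τ), ξ^{τ,κ} = √(d_{π_τ}/(d_{π_τ}−κ+1))·Σ_{ι=κ}^{d_{π_τ}} ε_{τ,ι}·e_ι. Then the rows of (1/√|G|)·(π(g)ξ)_{g∈G} ∈ ℂ^{n×|G|} are orthonormal; equivalently (1/|G|) Σ_{g∈G} (π(g)ξ)_k · conj((π(g)ξ)_j)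 = δ_{jk} for all 1 ≤ j, k ≤ n. -/
/-!
Expanding `π(g)ξ` blockwise, each entry of the Gram matrix `∑_g (π(g)ξ)_a · conj (π(g)ξ)_b` becomes
a combination of sums `∑_g ρ_τ(g)_{a i} · ρ_σ(g⁻¹)_{j b}`. Averaging the matrix unit `E_{ij}` over
`G` produces an intertwiner, so by Schur's lemma these sums vanish for `τ ≠ σ` and equal
`δ_{ab} δ_{ij} |G| / d_τ` for `τ = σ`. The entry thus reduces to
`δ_{ab} |G| / d_τ · ⟨ξ^{τ,κ}, ξ^{τ,κ'}⟩`, and the vectors `ξ^{τ,κ}` of one block are orthogonal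
with squared norm `d_τ`.
-/

open Matrix ComplexConjugate

private theorem map_inv_mul_map {G M : Type*} [Group G] [Monoid M] (f : G →* M) (g : G) :
    f g⁻¹ * f g = 1 := by
  rw [← map_mul, inv_mul_cancel, map_one]

namespace MatrixRep

variable {G K ι κ : Type*} [Field K] [Fintype ι] [DecidableEq ι] [Fintype κ] [DecidableEq κ]

section Monoid

variable [Monoid G]

def IsIrreducible (ρ : G →* Matrix ι ι K) : Prop :=
  ∀ U : Submodule K (ι → K), (∀ g, ∀ x ∈ U, ρ g *ᵥ x ∈ U) → U = ⊥ ∨ U = ⊤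

def IsIntertwiner (ρ₁ : G →* Matrix ι ι K) (ρ₂ : G →* Matrix κ κ K) (M : Matrix ι κ K) : Prop :=
  ∀ g, ρ₁ g * M = M * ρ₂ g

theorem IsIrreducible.exists_eq_smul_one [IsAlgClosed K]
    {ρ : G →* Matrix ι ι K} (hρ : IsIrreducible ρ) {M : Matrix ι ι K} (hM : IsIntertwiner ρ ρ M) :
    ∃ c : K, M = c • 1 := by
  cases isEmpty_or_nonempty ι
  · exact ⟨0, Subsingleton.elim _ _⟩
  obtain ⟨c, hc⟩ := Module.End.exists_eigenvalue M.mulVecLin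
  refine ⟨c, ?_⟩
  have hinv : ∀ g, ∀ x ∈ Module.End.eigenspace M.mulVecLin c,
      ρ g *ᵥ x ∈ Module.End.eigenspace M.mulVecLin c := by
    intro g x hx
    rw [Module.End.mem_eigenspace_iff, mulVecLin_apply] at hx ⊢
    rw [mulVec_mulVec, ← hM g, ← mulVec_mulVec, hx, mulVec_smul]
  rcases hρ _ hinv with hbot | htop
  · exact absurd hbot hc
  · ext i j
    have hj : Pi.single j 1 ∈ Module.End.eigenspace M.mulVecLin c := htop ▸ Submodule.mem_top
    rw [Module.End.mem_eigenspace_iff, mulVecLin_apply, mulVec_single_one] at hj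
    simpa [one_apply, Pi.single_apply, eq_comm] using congrFun hj i

end Monoid

variable [Group G] [Fintype G]

def average (ρ₁ : G →* Matrix ι ι K) (ρ₂ : G →* Matrix κ κ K) (E : Matrix ι κ K) :
    Matrix ι κ K :=
  ∑ g, ρ₁ g * E * ρ₂ g⁻¹

theorem isIntertwiner_average (ρ₁ : G →* Matrix ι ι K) (ρ₂ : G →* Matrix κ κ K)
    (E : Matrix ι κ K) : IsIntertwiner ρ₁ ρ₂ (average ρ₁ ρ₂ E) := by
  intro h
  rw [average, Matrix.mul_sum, Matrix.sum_mul]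
  refine Fintype.sum_equiv (Equiv.mulLeft h) _ _ fun g => ?_
  simp only [Equiv.coe_mulLeft, _root_.mul_inv_rev, map_mul, Matrix.mul_assoc, map_inv_mul_map,
    Matrix.mul_one]

theorem average_single_apply (ρ₁ : G →* Matrix ι ι K) (ρ₂ : G →* Matrix κ κ K)
    (i a : ι) (j b : κ) :
    average ρ₁ ρ₂ (single i j 1) a b = ∑ g, ρ₁ g a i * ρ₂ g⁻¹ j b := by
  simp [average, Matrix.sum_apply, Matrix.mul_apply, single_apply, ite_and, ite_mul]

theorem trace_average (ρ : G →* Matrix ι ι K) (E : Matrix ι ι K) :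
    (average ρ ρ E).trace = Fintype.card G • E.trace := by
  simp only [average, trace_sum, trace_mul_cycle (ρ _), map_inv_mul_map, Matrix.one_mul,
    Finset.sum_const, Finset.card_univ]

theorem sum_apply_mul_inv_apply_eq_zero {ρ₁ : G →* Matrix ι ι K} {ρ₂ : G →* Matrix κ κ K}
    (h : ∀ M, IsIntertwiner ρ₁ ρ₂ M → M = 0) (a i : ι) (j b : κ) :
    ∑ g, ρ₁ g a i * ρ₂ g⁻¹ j b = 0 := by
  rw [← average_single_apply, h _ (isIntertwiner_average ρ₁ ρ₂ _), Matrix.zero_apply]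

theorem IsIrreducible.sum_apply_mul_inv_apply [IsAlgClosed K] [CharZero K]
    {ρ : G →* Matrix ι ι K} (hρ : IsIrreducible ρ) (a i j b : ι) :
    ∑ g, ρ g a i * ρ g⁻¹ j b =
      if a = b ∧ i = j then (Fintype.card G : K) / Fintype.card ι else 0 := by
  have : Nonempty ι := ⟨a⟩
  obtain ⟨c, hc⟩ := hρ.exists_eq_smul_one (isIntertwiner_average ρ ρ (single i j 1))
  have hcard : (Fintype.card ι : K) ≠ 0 := Nat.cast_ne_zero.mpr Fintype.card_pos.ne'
  have hc' : c = if i = j then (Fintype.card G : K) / Fintype.card ι else 0 := by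
    have htrace := trace_average ρ (single i j 1)
    rw [hc, trace_smul, trace_one, smul_eq_mul, nsmul_eq_mul] at htrace
    split_ifs with hij
    · rw [hij, trace_single_eq_same] at htrace
      rw [eq_div_iff hcard, htrace, mul_one]
    · rw [trace_single_eq_of_ne (h := hij), mul_zero] at htrace
      exact (mul_eq_zero.mp htrace).resolve_right hcard
  rw [← average_single_apply, hc, Matrix.smul_apply, one_apply, hc']
  by_cases hab : a = b <;> by_cases hij : i = j <;> simp [hab, hij]

end MatrixRep

section Unitary



variable {G ι κ : Type*} [Group G] [Fintype ι] [DecidableEq ι] [Fintype κ] [DecidableEq κ]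

theorem conj_unitary_apply (ρ : G →* unitaryGroup ι ℂ) (g : G) (i j : ι) :
    conj ((ρ g : Matrix ι ι ℂ) i j) = (ρ g⁻¹ : Matrix ι ι ℂ) j i := by
  rw [map_inv, UnitaryGroup.inv_val, star_apply]
  rfl

variable [Fintype G]

theorem sum_mulVec_mul_conj_mulVec (ρ₁ : G →* unitaryGroup ι ℂ) (ρ₂ : G →* unitaryGroup κ ℂ)
    (x : ι → ℂ) (y : κ → ℂ) (a : ι) (b : κ) :
    ∑ g, ((ρ₁ g : Matrix ι ι ℂ) *ᵥ x) a * conj (((ρ₂ g : Matrix κ κ ℂ) *ᵥ y) b) =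
      ∑ i, ∑ j, x i * conj (y j) *
        ∑ g, (ρ₁ g : Matrix ι ι ℂ) a i * (ρ₂ g⁻¹ : Matrix κ κ ℂ) j b := by
  calc _ = ∑ g, ∑ i, ∑ j, x i * conj (y j) *
        ((ρ₁ g : Matrix ι ι ℂ) a i * (ρ₂ g⁻¹ : Matrix κ κ ℂ) j b) := by
        refine Finset.sum_congr rfl fun g _ => ?_
        simp only [mulVec, dotProduct, map_sum, map_mul, conj_unitary_apply, Finset.sum_mul_sum]
        exact Finset.sum_congr rfl fun i _ => Finset.sum_congr rfl fun j _ => by ring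
    _ = _ := by
        simp only [Finset.mul_sum]
        rw [Finset.sum_comm]
        exact Finset.sum_congr rfl fun i _ => Finset.sum_comm

theorem sum_mulVec_mul_conj_mulVec_eq_zero {ρ₁ : G →* unitaryGroup ι ℂ}
    {ρ₂ : G →* unitaryGroup κ ℂ}
    (h : ∀ M, MatrixRep.IsIntertwiner ((unitaryGroup ι ℂ).subtype.comp ρ₁)
      ((unitaryGroup κ ℂ).subtype.comp ρ₂) M → M = 0) (x : ι → ℂ) (y : κ → ℂ) (a : ι) (b : κ) :
    ∑ g, ((ρ₁ g : Matrix ι ι ℂ) *ᵥ x) a * conj (((ρ₂ g : Matrix κ κ ℂ) *ᵥ y) b) = 0 := by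
  simp only [sum_mulVec_mul_conj_mulVec]
  exact Finset.sum_eq_zero fun i _ => Finset.sum_eq_zero fun j _ =>
    mul_eq_zero_of_right _ (MatrixRep.sum_apply_mul_inv_apply_eq_zero h a i j b)

theorem sum_mulVec_mul_conj_mulVec_of_isIrreducible {ρ : G →* unitaryGroup ι ℂ}
    (hρ : MatrixRep.IsIrreducible ((unitaryGroup ι ℂ).subtype.comp ρ)) (x y : ι → ℂ) (a b : ι) :
    ∑ g, ((ρ g : Matrix ι ι ℂ) *ᵥ x) a * conj (((ρ g : Matrix ι ι ℂ) *ᵥ y) b) =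
      if a = b then Fintype.card G / Fintype.card ι * ∑ i, x i * conj (y i) else 0 := by
  have hschur : ∀ i j, ∑ g, (ρ g : Matrix ι ι ℂ) a i * (ρ g⁻¹ : Matrix ι ι ℂ) j b =
      if a = b ∧ i = j then (Fintype.card G : ℂ) / Fintype.card ι else 0 :=
    fun i j => hρ.sum_apply_mul_inv_apply a i j b
  simp only [sum_mulVec_mul_conj_mulVec, hschur]
  by_cases hab : a = b
  · simp [hab, Finset.mul_sum, mul_comm]
  · simp [hab]

end Unitary

/-- The paper's `ξ^{τ,κ}` for a block of dimension `n` and multiplicity `m`, with `κ` 0-indexed. -/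
noncomputable def blockVector (n m : ℕ) (ε : Fin n → ℂ) (κ : Fin m) (ι : Fin n) : ℂ :=
  if κ.1 + 1 = m then
    (if κ.1 ≤ ι.1 then ((Real.sqrt ((n : ℝ) / ((n : ℝ) - (κ.1 : ℝ))) : ℝ) : ℂ) * ε ι else 0)
  else
    (if ι.1 = κ.1 then ((Real.sqrt n : ℝ) : ℂ) * ε ι else 0)

theorem blockVector_mul_conj_of_ne {n m : ℕ} (ε : Fin n → ℂ) {κ₁ κ₂ : Fin m} (h : κ₁ ≠ κ₂)
    (ι : Fin n) : blockVector n m ε κ₁ ι * conj (blockVector n m ε κ₂ ι) = 0 := by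
  have h' : κ₁.1 ≠ κ₂.1 := Fin.val_ne_of_ne h
  unfold blockVector
  split_ifs <;> first | omega | simp

theorem ofReal_sqrt_mul_mul_conj {r : ℝ} (hr : 0 ≤ r) {z : ℂ} (hz : ‖z‖ = 1) :
    ((Real.sqrt r : ℝ) : ℂ) * z * conj (((Real.sqrt r : ℝ) : ℂ) * z) = r := by
  rw [Complex.mul_conj, Complex.normSq_eq_norm_sq, norm_mul, hz, Complex.norm_real,
    Real.norm_of_nonneg (Real.sqrt_nonneg r), mul_one, Real.sq_sqrt hr]

theorem blockVector_mul_conj_self {n m : ℕ} (hmn : m ≤ n) {ε : Fin n → ℂ}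
    (hε : ∀ ι, ‖ε ι‖ = 1) (κ : Fin m) (ι : Fin n) :
    blockVector n m ε κ ι * conj (blockVector n m ε κ ι) =
      if κ.1 + 1 = m then (if κ.1 ≤ ι.1 then (((n : ℝ) / ((n : ℝ) - (κ.1 : ℝ)) : ℝ) : ℂ) else 0)
      else (if ι.1 = κ.1 then (n : ℂ) else 0) := by
  have hκn : (κ.1 : ℝ) < n := by exact_mod_cast κ.2.trans_le hmn
  unfold blockVector
  split_ifs
  · exact ofReal_sqrt_mul_mul_conj (div_nonneg n.cast_nonneg (sub_pos.mpr hκn).le) (hε ι)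
  · simp
  · exact_mod_cast ofReal_sqrt_mul_mul_conj n.cast_nonneg (hε ι)
  · simp

theorem sum_blockVector_mul_conj_self {n m : ℕ} (hmn : m ≤ n) {ε : Fin n → ℂ}
    (hε : ∀ ι, ‖ε ι‖ = 1) (κ : Fin m) :
    ∑ ι, blockVector n m ε κ ι * conj (blockVector n m ε κ ι) = n := by
  have hκn : κ.1 < n := κ.2.trans_le hmn
  simp only [blockVector_mul_conj_self hmn hε]
  split_ifs
  · have hIci : ({ι : Fin n | κ.1 ≤ ι.1} : Finset (Fin n)) = Finset.Ici ⟨κ.1, hκn⟩ := by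
      ext; simp [Fin.le_def]
    rw [Finset.sum_ite, Finset.sum_const_zero, add_zero, Finset.sum_const, hIci, Fin.card_Ici,
      nsmul_eq_mul]
    have hne : (n : ℂ) - κ.1 ≠ 0 := sub_ne_zero.mpr (by exact_mod_cast hκn.ne')
    push_cast [Nat.cast_sub hκn.le]
    field_simp
  · rw [Finset.sum_eq_single_of_mem ⟨κ.1, hκn⟩ (Finset.mem_univ _), if_pos rfl]
    exact fun ι _ hι => if_neg fun h => hι (Fin.ext h)

theorem sum_blockVector_mul_conj {n m : ℕ} (hmn : m ≤ n) {ε : Fin n → ℂ}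
    (hε : ∀ ι, ‖ε ι‖ = 1) (κ₁ κ₂ : Fin m) :
    ∑ ι, blockVector n m ε κ₁ ι * conj (blockVector n m ε κ₂ ι) =
      if κ₁ = κ₂ then (n : ℂ) else 0 := by
  split_ifs with h
  · rw [h, sum_blockVector_mul_conj_self hmn hε]
  · exact Finset.sum_eq_zero fun ι _ => blockVector_mul_conj_of_ne ε h ι

/-- Let `π` be a block-diagonal unitary subrepresentation of the left
regular representation of a finite group `G`, with irreducible pairwise-inequivalent
blocks `ρ τ` of dimension `d τ` occurring with multiplicity `mult τ ≤ d τ`.  Coordinates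
of `ℂⁿ` are indexed by triples `(τ, κ, ι)`.  Let `ξ` be built blockwise from complex
units `ε τ ι`: for `κ + 1 < mult τ + 1` (i.e. `κ` not the last copy),
`ξ^{τ,κ} = √(d τ)·ε_{τ,κ}·e_κ`, and for the last copy `κ`,
`ξ^{τ,κ} = √(d τ/(d τ − κ))·∑_{ι ≥ κ} ε_{τ,ι}·e_ι` (0-indexed `κ`, matching the paper's
1-indexed formulas).  Then the rows of `(1/√|G|)(π(g)ξ)_{g∈G}` are orthonormal:
`(1/|G|) ∑_{g∈G} (π(g)ξ)_a · conj((π(g)ξ)_b) = δ_{ab}`. -/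
theorem stmt_16 {G : Type*} [Group G] [Fintype G]
    {T : ℕ} (d mult : Fin T → ℕ)
    (hmd : ∀ τ, 1 ≤ mult τ ∧ mult τ ≤ d τ)
    (ρ : (τ : Fin T) → G →* Matrix.unitaryGroup (Fin (d τ)) ℂ)
    -- each block is irreducible
    (hirr : ∀ τ, ∀ U : Submodule ℂ (Fin (d τ) → ℂ),
      (∀ g, ∀ x ∈ U, ((ρ τ g : Matrix (Fin (d τ)) (Fin (d τ)) ℂ)).mulVec x ∈ U) →
      U = ⊥ ∨ U = ⊤)
    -- distinct blocks are inequivalent (no nonzero intertwiner)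
    (hineq : ∀ τ τ', τ ≠ τ' →
      ¬∃ M : Matrix (Fin (d τ)) (Fin (d τ')) ℂ, M ≠ 0 ∧
        ∀ g, (ρ τ g : Matrix (Fin (d τ)) (Fin (d τ)) ℂ) * M
            = M * (ρ τ' g : Matrix (Fin (d τ')) (Fin (d τ')) ℂ))
    (ε : (τ : Fin T) → Fin (d τ) → ℂ) (hε : ∀ τ ι, ‖ε τ ι‖ = 1)
    (ξ : ((τ : Fin T) × (Fin (mult τ) × Fin (d τ))) → ℂ)
    (hξ : ∀ (τ : Fin T) (κ : Fin (mult τ)) (ι : Fin (d τ)),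
      ξ ⟨τ, (κ, ι)⟩ =
        if κ.1 + 1 = mult τ then
          (if κ.1 ≤ ι.1 then
            ((Real.sqrt ((d τ : ℝ) / ((d τ : ℝ) - (κ.1 : ℝ))) : ℝ) : ℂ) * ε τ ι
          else 0)
        else
          (if ι.1 = κ.1 then ((Real.sqrt (d τ) : ℝ) : ℂ) * ε τ ι else 0)) :
    ∀ a b : ((τ : Fin T) × (Fin (mult τ) × Fin (d τ))),
      (1 / (Fintype.card G : ℂ)) * ∑ g : G,
          (∑ ι', (ρ a.1 g : Matrix (Fin (d a.1)) (Fin (d a.1)) ℂ) a.2.2 ι' *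
              ξ ⟨a.1, (a.2.1, ι')⟩) *
          (starRingEnd ℂ) (∑ ι', (ρ b.1 g : Matrix (Fin (d b.1)) (Fin (d b.1)) ℂ) b.2.2 ι' *
              ξ ⟨b.1, (b.2.1, ι')⟩)
        = if a = b then 1 else 0 := by
  rintro ⟨τa, κa, ia⟩ ⟨τb, κb, ib⟩
  have hmulVec : ∀ τ (g : G) κ i, ∑ ι', (ρ τ g : Matrix (Fin (d τ)) (Fin (d τ)) ℂ) i ι' *
      ξ ⟨τ, (κ, ι')⟩ = ((ρ τ g : Matrix _ _ ℂ) *ᵥ blockVector (d τ) (mult τ) (ε τ) κ) i :=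
    fun τ g κ i => by simp only [hξ]; rfl
  simp only [hmulVec]
  by_cases hτ : τa = τb
  · subst hτ
    have hG : (Fintype.card G : ℂ) ≠ 0 := Nat.cast_ne_zero.mpr Fintype.card_ne_zero
    have hd : (d τa : ℂ) ≠ 0 := Nat.cast_ne_zero.mpr (Fin.pos ia).ne'
    rw [sum_mulVec_mul_conj_mulVec_of_isIrreducible (hirr τa),
      sum_blockVector_mul_conj (hmd τa).2 (hε τa), Fintype.card_fin]
    by_cases hi : ia = ib <;> by_cases hκ : κa = κb <;> simp [hi, hκ]
    field_simp
  · rw [sum_mulVec_mul_conj_mulVec_eq_zero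
      (fun M hM => not_not.mp fun h0 => hineq τa τb hτ ⟨M, h0, hM⟩), mul_zero,
      if_neg (by simp [hτ])]
end
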